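/- arXiv:2512.08631 — 3 statements merged into one kernel-verified Lean document; each statement's English description precedes it below -/
import Mathlib

section
/- The functions τ ↦ e^{2πiτ} and τ ↦ j(τ) on the upper half-plane ℍ are algebraically independent over ℚ; equivalently, the meromorphic function J on the punctured unit disk is transcendental over the rational function field ℚ(z). -/
/-!
For a real nome `0 < r < 1` the value `J(r)` is real. Since `E₄(r) ≥ 1` and
`Δ(r) ≤ r ∏ exp(-24 rⁿ) = r exp(-24 r / (1 - r))`, we get `J(r) ≥ exp(r / (1 - r))`, which blows
up as `r → 1⁻` faster than any pole. This rules out a relation `P(r, J(r)) = 0` with `P ≠ 0`: by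
Cauchy's bound a root `y` of `P(r, ·)` has `|y| < 1 + M / |c(r)|`, where `M` bounds the other
coefficients near `1` and the leading coefficient `c` vanishes at `1` only to some finite order
`m`, so `(1 - r)ᵐ J(r)` would stay bounded.
-/

/-- The modular discriminant in the nome: `Δ(q) = q ∏_{n ≥ 1} (1 - qⁿ)²⁴`. -/
noncomputable def Δ (q : ℂ) : ℂ := q * ∏' n : ℕ, (1 - q ^ (n + 1)) ^ 24

/-- The normalized Eisenstein series of weight 4 in the nome. -/
noncomputable def E₄ (q : ℂ) : ℂ :=
  1 + 240 * ∑' n : ℕ, (ArithmeticFunction.sigma 3 (n + 1) : ℂ) * q ^ (n + 1)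

/-- The modular `j`-invariant in the nome: `J(q) = E₄(q)³ / Δ(q)`. -/
noncomputable def J (q : ℂ) : ℂ := E₄ q ^ 3 / Δ q

/-- The classical modular `j`-invariant on the upper half-plane, `j(τ) = J(e^{2πiτ})`. -/
noncomputable def jInv (τ : UpperHalfPlane) : ℂ :=
  J (Complex.exp (2 * Real.pi * Complex.I * (τ : ℂ)))

open Filter Topology Polynomial
open scoped Polynomial.Bivariate

namespace Polynomial

lemma cauchyBound_le_of_norm_coeff_le {K : Type*} [NormedDivisionRing K] {p : K[X]} {M : ℝ}
    (hM : ∀ k, ‖p.coeff k‖ ≤ M) : (cauchyBound p : ℝ) ≤ M / ‖p.leadingCoeff‖ + 1 := by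
  have hM0 : 0 ≤ M := (norm_nonneg _).trans (hM 0)
  have hsup : (((Finset.range p.natDegree).sup (‖p.coeff ·‖₊) : NNReal) : ℝ) ≤ M := by
    rw [← Real.coe_toNNReal M hM0, NNReal.coe_le_coe]
    exact Finset.sup_le fun k _ => (Real.le_toNNReal_iff_coe_le hM0).2 (hM k)
  rw [cauchyBound, NNReal.coe_add, NNReal.coe_div, coe_nnnorm, NNReal.coe_one]
  gcongr

lemma exists_eventually_mul_norm_sub_pow_le_norm_eval {K : Type*} [NormedField K] {p : K[X]}
    (hp : p ≠ 0) (a : K) :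
    ∃ (m : ℕ) (ε : ℝ), 0 < ε ∧ ∀ᶠ x in 𝓝 a, ε * ‖x - a‖ ^ m ≤ ‖p.eval x‖ := by
  obtain ⟨q, hpq, hq⟩ := p.exists_eq_pow_rootMultiplicity_mul_and_not_dvd hp a
  generalize p.rootMultiplicity a = m at hpq
  have hqa : 0 < ‖q.eval a‖ := norm_pos_iff.2 fun h => hq (dvd_iff_isRoot.2 h)
  refine ⟨m, ‖q.eval a‖ / 2, half_pos hqa, ?_⟩
  filter_upwards [continuousAt_const.eventually_lt q.continuous.norm.continuousAt
    (half_lt_self hqa)] with x hx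
  rw [hpq, eval_mul, eval_pow, eval_sub, eval_X, eval_C, norm_mul, norm_pow, mul_comm]
  gcongr

lemma exists_eventually_norm_eval_coeff_le {K : Type*} [NormedField K] (P : K[X][Y]) (a : K) :
    ∃ M, ∀ᶠ x in 𝓝 a, ∀ k, ‖(P.coeff k).eval x‖ ≤ M := by
  set g : K → ℝ := fun x => ∑ k ∈ P.support, ‖(P.coeff k).eval x‖
  have hg : Continuous g := by fun_prop
  refine ⟨g a + 1, ?_⟩
  filter_upwards [hg.continuousAt.eventually_lt continuousAt_const (lt_add_one (g a))] with x hx k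
  refine le_trans ?_ hx.le
  by_cases hk : k ∈ P.support
  · exact Finset.single_le_sum (f := fun k => ‖(P.coeff k).eval x‖) (fun _ _ => norm_nonneg _) hk
  · rw [notMem_support_iff.1 hk, eval_zero, norm_zero]
    exact Finset.sum_nonneg fun _ _ => norm_nonneg _

lemma norm_lt_of_evalEval_eq_zero {K : Type*} [NormedField K] {P : K[X][Y]} {x y : K} {M : ℝ}
    (hc : P.leadingCoeff.eval x ≠ 0) (hM : ∀ k, ‖(P.coeff k).eval x‖ ≤ M)
    (hy : P.evalEval x y = 0) : ‖y‖ < M / ‖P.leadingCoeff.eval x‖ + 1 := by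
  set Q := P.map (evalRingHom x)
  have hQc : Q.leadingCoeff = P.leadingCoeff.eval x := leadingCoeff_map_of_leadingCoeff_ne_zero _ hc
  have hQ0 : Q ≠ 0 := fun h => hc (by rw [← hQc, h, leadingCoeff_zero])
  have hroot : Q.IsRoot y := by rwa [IsRoot, map_evalRingHom_eval]
  refine (NNReal.coe_lt_coe.2 (hroot.norm_lt_cauchyBound hQ0)).trans_le ?_
  rw [← hQc]
  exact cauchyBound_le_of_norm_coeff_le fun k => by rw [coeff_map]; exact hM k

theorem frequently_evalEval_ne_zero_of_tendsto {P : ℝ[X][Y]} (hP : P ≠ 0) {f : ℝ → ℝ} {a : ℝ}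
    (hf : ∀ m : ℕ, Tendsto (fun r => (a - r) ^ m * f r) (𝓝[<] a) atTop) :
    ∃ᶠ r in 𝓝[<] a, P.evalEval r (f r) ≠ 0 := by
  obtain ⟨m, ε, hε, hlead⟩ :=
    exists_eventually_mul_norm_sub_pow_le_norm_eval (leadingCoeff_ne_zero.2 hP) a
  obtain ⟨M, hM⟩ := exists_eventually_norm_eval_coeff_le P a
  intro hvanish
  obtain ⟨r, hPr, hbig, hc, hMr, hr⟩ := (hvanish.and <|
    ((hf m).eventually_gt_atTop (M / ε + 1)).and <| (hlead.filter_mono nhdsWithin_le_nhds).and <|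
    (hM.filter_mono nhdsWithin_le_nhds).and <| Ioo_mem_nhdsLT (sub_one_lt a)).exists
  set c := P.leadingCoeff.eval r
  have hd : 0 < a - r := sub_pos.2 hr.2
  rw [Real.norm_eq_abs, abs_sub_comm, abs_of_pos hd] at hc
  have hc0 : 0 < ‖c‖ := (mul_pos hε (pow_pos hd m)).trans_le hc
  have hy := norm_lt_of_evalEval_eq_zero (norm_pos_iff.1 hc0) hMr (not_not.1 hPr)
  have hM0 : 0 ≤ M := (norm_nonneg _).trans (hMr 0)
  have hpole : (a - r) ^ m / ‖c‖ ≤ 1 / ε := by rwa [div_le_div_iff₀ hc0 hε, one_mul, mul_comm]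
  have : (a - r) ^ m * f r < M / ε + 1 := calc
    (a - r) ^ m * f r ≤ (a - r) ^ m * ‖f r‖ := by gcongr; exact Real.le_norm_self _
    _ < (a - r) ^ m * (M / ‖c‖ + 1) := by gcongr
    _ = M * ((a - r) ^ m / ‖c‖) + (a - r) ^ m := by ring
    _ ≤ M * (1 / ε) + 1 :=
      add_le_add (mul_le_mul_of_nonneg_left hpole hM0) (pow_le_one₀ hd.le (by linarith [hr.1]))
    _ = M / ε + 1 := by ring
  linarith

theorem evalEval_symm_equivMvPolynomial {R : Type*} [CommSemiring R] (x y : R)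
    (p : MvPolynomial (Fin 2) R) :
    ((Bivariate.equivMvPolynomial R).symm p).evalEval x y = MvPolynomial.eval ![x, y] p := by
  change evalEval x y (MvPolynomial.aeval ![C X, X] p) = _
  have hv : (fun i => aevalAeval x y (![C X, X] i : R[X][Y])) = ![x, y] := by
    ext i
    fin_cases i <;> simp
  rw [← coe_aevalAeval_eq_evalEval, MvPolynomial.comp_aeval_apply, hv]
  rfl

end Polynomial

theorem MvPolynomial.eq_zero_of_eventually_aeval_eq_zero {K : Type*} [Field K] [Algebra K ℝ]
    {p : MvPolynomial (Fin 2) K} {f : ℝ → ℝ} {a : ℝ}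
    (hf : ∀ m : ℕ, Tendsto (fun r => (a - r) ^ m * f r) (𝓝[<] a) atTop)
    (hp : ∀ᶠ r in 𝓝[<] a, aeval ![r, f r] p = 0) : p = 0 := by
  by_contra hp0
  set P := (Bivariate.equivMvPolynomial ℝ).symm (p.map (algebraMap K ℝ))
  have hP : P ≠ 0 := by
    simpa [P] using (map_injective _ (algebraMap K ℝ).injective).ne hp0
  refine (frequently_evalEval_ne_zero_of_tendsto hP hf).and_eventually hp |>.exists.elim ?_
  rintro r ⟨hne, hzero⟩
  rw [evalEval_symm_equivMvPolynomial, eval_map, ← aeval_def] at hne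
  exact hne hzero

section

variable {r : ℝ}

lemma exists_hasSum_log_one_sub_pow_succ_le (hr0 : 0 ≤ r) (hr1 : r < 1) :
    ∃ L, HasSum (fun n : ℕ => Real.log (1 - r ^ (n + 1))) L ∧ L ≤ -(r / (1 - r)) := by
  have hgeom : HasSum (fun n : ℕ => -r ^ (n + 1)) (-(r / (1 - r))) := by
    simpa [pow_succ', div_eq_mul_inv] using ((hasSum_geometric_of_lt_one hr0 hr1).mul_left r).neg
  have hlog : Summable fun n : ℕ => Real.log (1 - r ^ (n + 1)) := by
    simpa [sub_eq_add_neg] using Real.summable_log_one_add_of_summable hgeom.summable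
  refine ⟨_, hlog.hasSum, hasSum_le (fun n => ?_) hlog.hasSum hgeom⟩
  have hpos : 0 < 1 - r ^ (n + 1) := sub_pos.2 (pow_lt_one₀ hr0 hr1 n.succ_ne_zero)
  linarith [Real.log_le_sub_one_of_pos hpos]

lemma exists_hasProd_one_sub_pow_succ_pow (hr0 : 0 ≤ r) (hr1 : r < 1) (k : ℕ) :
    ∃ P, HasProd (fun n : ℕ => (1 - r ^ (n + 1)) ^ k) P ∧ 0 < P ∧
      P ≤ Real.exp (-(k * (r / (1 - r)))) := by
  obtain ⟨L, hL, hLle⟩ := exists_hasSum_log_one_sub_pow_succ_le hr0 hr1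
  refine ⟨Real.exp (k * L), ?_, Real.exp_pos _, ?_⟩
  · refine Real.hasProd_of_hasSum_log (fun n => ?_) ?_
    · exact pow_pos (sub_pos.2 (pow_lt_one₀ hr0 hr1 n.succ_ne_zero)) k
    · simpa [Real.log_pow] using hL.mul_left (k : ℝ)
  · rw [Real.exp_le_exp, ← mul_neg]
    exact mul_le_mul_of_nonneg_left hLle k.cast_nonneg

lemma exists_E₄_ofReal_eq (hr0 : 0 ≤ r) : ∃ e : ℝ, E₄ r = e ∧ 1 ≤ e := by
  refine ⟨1 + 240 * ∑' n : ℕ, (ArithmeticFunction.sigma 3 (n + 1) : ℝ) * r ^ (n + 1), ?_, ?_⟩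
  · simp [E₄, Complex.ofReal_tsum]
  · have : 0 ≤ ∑' n : ℕ, (ArithmeticFunction.sigma 3 (n + 1) : ℝ) * r ^ (n + 1) :=
      tsum_nonneg fun n => by positivity
    linarith

lemma exists_Δ_ofReal_eq (hr0 : 0 < r) (hr1 : r < 1) :
    ∃ d : ℝ, Δ r = d ∧ 0 < d ∧ d ≤ Real.exp (-(24 * (r / (1 - r)))) := by
  obtain ⟨P, hP, hP0, hPle⟩ := exists_hasProd_one_sub_pow_succ_pow hr0.le hr1 24
  refine ⟨r * P, ?_, mul_pos hr0 hP0, ?_⟩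
  · have := (hP.map Complex.ofRealHom Complex.continuous_ofReal).tprod_eq
    simp only [Function.comp_def, map_pow, map_sub, map_one, Complex.ofRealHom_eq_coe] at this
    rw [Δ, Complex.ofReal_mul, ← this]
  · nlinarith

lemma exists_J_ofReal_eq (hr0 : 0 < r) (hr1 : r < 1) :
    ∃ y : ℝ, J r = y ∧ Real.exp (r / (1 - r)) ≤ y := by
  obtain ⟨e, he, he1⟩ := exists_E₄_ofReal_eq hr0.le
  obtain ⟨d, hd, hd0, hdle⟩ := exists_Δ_ofReal_eq hr0 hr1
  refine ⟨e ^ 3 / d, by rw [J, he, hd]; push_cast; rfl, ?_⟩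
  have hx : 0 ≤ r / (1 - r) := div_nonneg hr0.le (sub_pos.2 hr1).le
  calc Real.exp (r / (1 - r)) ≤ Real.exp (24 * (r / (1 - r))) := by gcongr; linarith
    _ = 1 / Real.exp (-(24 * (r / (1 - r)))) := by rw [Real.exp_neg, one_div, inv_inv]
    _ ≤ 1 / d := one_div_le_one_div_of_le hd0 hdle
    _ ≤ e ^ 3 / d := by gcongr; exact one_le_pow₀ he1

lemma exists_exp_two_pi_I_mul_eq_ofReal (hr0 : 0 < r) (hr1 : r < 1) :
    ∃ τ : UpperHalfPlane, Complex.exp (2 * Real.pi * Complex.I * (τ : ℂ)) = r := by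
  have hr : (r : ℂ) ≠ 0 := Complex.ofReal_ne_zero.2 hr0.ne'
  have hnorm : ‖(r : ℂ)‖ < 1 := by rwa [Complex.norm_real, Real.norm_of_nonneg hr0.le]
  refine ⟨⟨_, Function.Periodic.im_invQParam_pos_of_norm_lt_one one_pos hnorm hr⟩, ?_⟩
  simpa [Function.Periodic.qParam] using Function.Periodic.qParam_right_inv one_ne_zero hr

end

lemma tendsto_one_sub_pow_mul_exp_div_one_sub (m : ℕ) :
    Tendsto (fun r => (1 - r) ^ m * Real.exp (r / (1 - r))) (𝓝[<] 1) atTop := by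
  have ht : Tendsto (fun r : ℝ => (1 - r)⁻¹) (𝓝[<] 1) atTop := by
    refine Tendsto.inv_tendsto_nhdsGT_zero (tendsto_nhdsWithin_of_tendsto_nhds_of_eventually_within
      _ ?_ (eventually_nhdsWithin_of_forall fun r hr => Set.mem_Ioi.2 (sub_pos.2 hr)))
    exact ((continuous_sub_left 1).tendsto' 1 0 (sub_self 1)).mono_left nhdsWithin_le_nhds
  refine (((Real.tendsto_exp_div_pow_atTop m).comp ht).const_mul_atTop (Real.exp_pos (-1))).congr'
    ?_
  filter_upwards [self_mem_nhdsWithin] with r (hr : r < 1)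
  have h : r / (1 - r) = (1 - r)⁻¹ + -1 := by
    have : 1 - r ≠ 0 := (sub_pos.2 hr).ne'
    field_simp
    ring
  simp only [Function.comp_apply, h, Real.exp_add, inv_pow, div_inv_eq_mul]
  ring

/-- The functions `τ ↦ e^{2πiτ}` and `τ ↦ j(τ)` on the upper half-plane `ℍ` are
algebraically independent over `ℚ`. -/
theorem qexp_jInv_algebraicallyIndependent :
    AlgebraicIndependent ℚ
      ![(fun τ : UpperHalfPlane => Complex.exp (2 * Real.pi * Complex.I * (τ : ℂ))),
        (fun τ : UpperHalfPlane => jInv τ)] := by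
  rw [algebraicIndependent_iff]
  intro p hp
  have hJ : ∀ r ∈ Set.Ioo (0 : ℝ) 1, J r = (J r).re ∧ Real.exp (r / (1 - r)) ≤ (J r).re := by
    rintro r ⟨hr0, hr1⟩
    obtain ⟨y, hy, hle⟩ := exists_J_ofReal_eq hr0 hr1
    simpa [hy] using hle
  refine MvPolynomial.eq_zero_of_eventually_aeval_eq_zero (a := 1) (f := fun r => (J r).re)
    (fun m => ?_) ?_
  · refine tendsto_atTop_mono' _ ?_ (tendsto_one_sub_pow_mul_exp_div_one_sub m)
    filter_upwards [Ioo_mem_nhdsLT zero_lt_one] with r hr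
    exact mul_le_mul_of_nonneg_left (hJ r hr).2 (pow_nonneg (sub_pos.2 hr.2).le m)
  · filter_upwards [Ioo_mem_nhdsLT zero_lt_one] with r hr
    obtain ⟨τ, hτ⟩ := exists_exp_two_pi_I_mul_eq_ofReal hr.1 hr.2
    have hτp := congr_fun hp τ
    rw [Pi.zero_apply, ← Pi.evalAlgHom_apply ℚ (fun _ => ℂ) τ (MvPolynomial.aeval _ p),
      MvPolynomial.comp_aeval_apply] at hτp
    rw [← MvPolynomial.aeval_algebraMap_eq_zero_iff (B := ℂ)]
    convert hτp using 2
    ext i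
    fin_cases i
    · simp [hτ]
    · simp [jInv, hτ]
      exact (hJ r hr).1.symm
end

section
/- Let X > Y ≥ 1 be integers and let m_{i,j} ∈ ℤ for 1 ≤ i ≤ Y and 1 ≤ j ≤ X, not all zero, with B := max_{i,j} |m_{i,j}|. Then there exists a nonzero vector (x₁, …, x_X) ∈ ℤ^X satisfying Σ_{j=1}^{X} m_{i,j} x_j = 0 for every 1 ≤ i ≤ Y, and such that |x_j| ≤ (X B)^{Y/(X−Y)} for all j. -/
attribute [local instance] Matrix.seminormedAddCommGroup

theorem Matrix.norm_int_eq_sup_natAbs {α β : Type*} [Fintype α] [Fintype β]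
    (A : Matrix α β ℤ) :
    ‖A‖ = ((Finset.univ.sup fun p : α × β => (A p.1 p.2).natAbs : ℕ) : ℝ) := by
  have h : (Finset.univ.sup fun i => ‖A i‖₊) =
      ((Finset.univ.sup fun p : α × β => (A p.1 p.2).natAbs : ℕ) : NNReal) := by
    rw [Finset.apply_sup_eq_sup_comp_of_linearOrder (Nat.cast : ℕ → NNReal)
        Nat.mono_cast (by simp),
      ← Finset.univ_product_univ, Finset.sup_product_left]
    simp_rw [Pi.nnnorm_def, Function.comp, NNReal.natCast_natAbs]
  rw [Matrix.norm_def, Pi.norm_def, h]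
  norm_cast

/-- **Siegel's lemma.** -/
theorem siegels_lemma (X Y : ℕ) (hY : 1 ≤ Y) (hXY : Y < X)
    (m : Fin Y → Fin X → ℤ) (hm : m ≠ 0) :
    ∃ x : Fin X → ℤ, x ≠ 0 ∧ (∀ i : Fin Y, ∑ j : Fin X, m i j * x j = 0) ∧
      ∀ j : Fin X, (|x j| : ℝ) ≤
        ((X : ℝ) * (Finset.univ.sup fun p : Fin Y × Fin X => (m p.1 p.2).natAbs : ℕ)) ^
          ((Y : ℝ) / ((X : ℝ) - (Y : ℝ))) := by
  obtain ⟨x, hx0, hsol, hle⟩ := Int.Matrix.exists_ne_zero_int_vec_norm_le' (Matrix.of m)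
    (by simpa using hXY) (by rw [Fintype.card_fin]; exact hY) hm
  refine ⟨x, hx0, fun i => congrFun hsol i, fun j => ?_⟩
  calc (|x j| : ℝ) = ‖x j‖ := (Int.norm_eq_abs _).symm
    _ ≤ ‖x‖ := norm_le_pi_norm x j
    _ ≤ _ := by simpa [Matrix.norm_int_eq_sup_natAbs] using hle
end

section
/- For every rational number θ and every τ in the upper half-plane ℍ, there exists a sequence of matrices γ_n = (a_n b_n; c_n d_n) ∈ SL₂(ℤ) with a_n/c_n → θ, c_n/d_n → 0, d_n ≥ 0 and |c_n d_n| → ∞, and for any such sequence one has e^{2πi γ_n τ} → e^{2πiθ} as n → ∞, where γτ := (aτ + b)/(cτ + d) denotes the fractional linear action of γ = (a b; c d) ∈ SL₂(ℤ) on ℍ. -/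
/-!
For `ad - bc = 1` one has `(aτ + b)/(cτ + d) = a/c - 1/(c(cτ + d))`, and
`c(cτ + d) = cd · (1 + (c/d)τ)` has norm tending to infinity because `|cd| → ∞` while
`1 + (c/d)τ → 1`. Hence `γₙτ → θ`, and the exponential is continuous. For existence, write
`θ = p/q` in lowest terms, complete `(p, q)` to a matrix in `SL₂(ℤ)` and multiply on the right
by large powers of `(1 1; 0 1)`, which keeps the first column and pushes `d` to infinity.
-/

open Filter

/-- A sequence `γₙ = (aₙ bₙ; cₙ dₙ) ∈ SL₂(ℤ)` approximating the rational `θ`: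
`aₙ/cₙ → θ`, `cₙ/dₙ → 0`, `dₙ ≥ 0`, `|cₙ dₙ| → ∞`. -/
def ApproxSeq (θ : ℚ) (γ : ℕ → Matrix.SpecialLinearGroup (Fin 2) ℤ) : Prop :=
  Tendsto (fun n => ((γ n 0 0 : ℤ) : ℝ) / ((γ n 1 0 : ℤ) : ℝ)) atTop (nhds (θ : ℝ)) ∧
  Tendsto (fun n => ((γ n 1 0 : ℤ) : ℝ) / ((γ n 1 1 : ℤ) : ℝ)) atTop (nhds 0) ∧
  (∀ n, 0 ≤ (γ n 1 1 : ℤ)) ∧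
  Tendsto (fun n => |(γ n 1 0 : ℤ) * (γ n 1 1 : ℤ)|) atTop atTop

open Topology

theorem mul_add_div_mul_add_eq_div_sub_inv {K : Type*} [Field K] {a b c d z : K}
    (hdet : a * d - b * c = 1) (hc : c ≠ 0) (hcz : c * z + d ≠ 0) :
    (a * z + b) / (c * z + d) = a / c - (c * (c * z + d))⁻¹ := by
  rw [eq_sub_iff_add_eq, inv_eq_one_div, div_add_div _ _ hcz (mul_ne_zero hc hcz),
    div_eq_div_iff (mul_ne_zero hcz (mul_ne_zero hc hcz)) hc]
  linear_combination -(c * (c * z + d)) * hdet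

theorem Matrix.SpecialLinearGroup.intCast_det_fin_two {R : Type*} [CommRing R]
    (g : Matrix.SpecialLinearGroup (Fin 2) ℤ) :
    (g 0 0 : R) * g 1 1 - (g 0 1 : R) * g 1 0 = 1 := by
  simpa using congrArg (Int.cast : ℤ → R) ((Matrix.det_fin_two _).symm.trans g.det_coe)

section NormedField

variable {α 𝕜 : Type*} [NormedField 𝕜] {l : Filter α} {a b c d : α → 𝕜}

theorem tendsto_norm_mul_mul_add_atTop (z : 𝕜) (hcd : Tendsto (fun n => c n / d n) l (𝓝 0))
    (hprod : Tendsto (fun n => ‖c n * d n‖) l atTop) :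
    Tendsto (fun n => ‖c n * (c n * z + d n)‖) l atTop := by
  have hd : ∀ᶠ n in l, d n ≠ 0 :=
    (hprod.eventually_ne_atTop 0).mono fun n hn h0 => hn (by simp [h0])
  have hunit : Tendsto (fun n => ‖1 + c n / d n * z‖) l (𝓝 1) := by
    simpa using ((hcd.mul_const z).const_add 1).norm
  refine (hprod.atTop_mul_pos one_pos hunit).congr' ?_
  filter_upwards [hd] with n hn
  rw [← norm_mul]
  congr 1
  field_simp
  ring

theorem tendsto_mul_add_div_mul_add {θ : 𝕜} (z : 𝕜) (hac : Tendsto (fun n => a n / c n) l (𝓝 θ))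
    (hcd : Tendsto (fun n => c n / d n) l (𝓝 0)) (hprod : Tendsto (fun n => ‖c n * d n‖) l atTop)
    (hdet : ∀ n, a n * d n - b n * c n = 1) :
    Tendsto (fun n => (a n * z + b n) / (c n * z + d n)) l (𝓝 θ) := by
  have hnorm := tendsto_norm_mul_mul_add_atTop z hcd hprod
  have hinv : Tendsto (fun n => (c n * (c n * z + d n))⁻¹) l (𝓝 0) :=
    tendsto_zero_iff_norm_tendsto_zero.2 (by simp only [norm_inv]; exact hnorm.inv_tendsto_atTop)
  have hlim : Tendsto (fun n => a n / c n - (c n * (c n * z + d n))⁻¹) l (𝓝 θ) := by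
    simpa using hac.sub hinv
  refine hlim.congr' ?_
  filter_upwards [hnorm.eventually_ne_atTop 0] with n hn
  rw [norm_ne_zero_iff, mul_ne_zero_iff] at hn
  exact (mul_add_div_mul_add_eq_div_sub_inv (hdet n) hn.1 hn.2).symm

end NormedField

theorem exists_approxSeq (θ : ℚ) : ∃ γ, ApproxSeq θ γ := by
  obtain ⟨u, v, huv⟩ : IsCoprime θ.num (θ.den : ℤ) := Int.isCoprime_iff_gcd_eq_one.2 θ.reduced
  have hq : (1 : ℤ) ≤ θ.den := by have := θ.den_pos; omega
  let d : ℕ → ℤ := fun n => u + θ.den * (n + |u|)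
  have hd : ∀ n : ℕ, (n : ℤ) ≤ d n := fun n => by nlinarith [neg_abs_le u, abs_nonneg u]
  have hd_top : Tendsto d atTop atTop := tendsto_atTop_mono hd tendsto_natCast_atTop_atTop
  refine ⟨fun n => ⟨!![θ.num, -v + θ.num * (n + |u|); θ.den, d n], ?_⟩, ?_⟩
  · rw [Matrix.det_fin_two_of]
    linear_combination huv
  simp only [ApproxSeq, Matrix.of_apply, Matrix.cons_val', Matrix.cons_val_zero, Matrix.empty_val',
    Matrix.cons_val_fin_one, Matrix.cons_val_one]
  refine ⟨?_, ?_, fun n => (Nat.cast_nonneg n).trans (hd n), ?_⟩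
  · simp [Rat.cast_def]
  · exact tendsto_const_nhds.div_atTop (tendsto_intCast_atTop_atTop.comp hd_top)
  · refine tendsto_atTop_mono (fun n => ?_) hd_top
    exact le_abs.2 (Or.inl (le_mul_of_one_le_left ((Nat.cast_nonneg n).trans (hd n)) hq))

theorem exp_fractional_linear_tendsto_general (θ : ℚ) (τ : ℂ) :
    (∃ γ : ℕ → Matrix.SpecialLinearGroup (Fin 2) ℤ, ApproxSeq θ γ) ∧
    ∀ γ : ℕ → Matrix.SpecialLinearGroup (Fin 2) ℤ, ApproxSeq θ γ →
      Tendsto (fun n => Complex.exp (2 * Real.pi * Complex.I *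
          ((((γ n 0 0 : ℤ) : ℂ) * τ + ((γ n 0 1 : ℤ) : ℂ)) /
            (((γ n 1 0 : ℤ) : ℂ) * τ + ((γ n 1 1 : ℤ) : ℂ)))))
        atTop (nhds (Complex.exp (2 * Real.pi * Complex.I * (θ : ℂ)))) := by
  refine ⟨exists_approxSeq θ, fun γ ⟨hac, hcd, _, hprod⟩ => ?_⟩
  have hprodC : Tendsto (fun n => ‖((γ n 1 0 : ℤ) : ℂ) * ((γ n 1 1 : ℤ) : ℂ)‖) atTop atTop := by
    refine (tendsto_intCast_atTop_atTop.comp hprod).congr fun n => ?_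
    simp [Complex.norm_intCast]
  have hmob := tendsto_mul_add_div_mul_add τ (by simpa using hac.ofReal) (by simpa using hcd.ofReal)
    hprodC fun n => (γ n).intCast_det_fin_two
  exact (Complex.continuous_exp.tendsto _).comp (hmob.const_mul _)

/-- For every rational `θ` and every `τ` in the upper half-plane, there is a
sequence `γₙ ∈ SL₂(ℤ)` with `aₙ/cₙ → θ`, `cₙ/dₙ → 0`, `dₙ ≥ 0`, `|cₙ dₙ| → ∞`, and
for any such sequence `e^{2πi γₙτ} → e^{2πiθ}`, where
`γτ = (aτ + b)/(cτ + d)` is the fractional linear action. -/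
theorem exp_fractional_linear_tendsto (θ : ℚ) (τ : ℂ) (hτ : 0 < τ.im) :
    (∃ γ : ℕ → Matrix.SpecialLinearGroup (Fin 2) ℤ, ApproxSeq θ γ) ∧
    ∀ γ : ℕ → Matrix.SpecialLinearGroup (Fin 2) ℤ, ApproxSeq θ γ →
      Tendsto (fun n => Complex.exp (2 * Real.pi * Complex.I *
          ((((γ n 0 0 : ℤ) : ℂ) * τ + ((γ n 0 1 : ℤ) : ℂ)) /
            (((γ n 1 0 : ℤ) : ℂ) * τ + ((γ n 1 1 : ℤ) : ℂ)))))
        atTop (nhds (Complex.exp (2 * Real.pi * Complex.I * (θ : ℂ)))) :=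
  exp_fractional_linear_tendsto_general θ τ
end
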